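/- (Well-posedness of the Riccati equation (3.11) under Assumption 3.3.) Let T > 0 and let A₁, B₁, C₁, C̃₁, D₁, D̃₁, E₁, F₁, F̃₁, Q₁, R₁ : [0,T] → ℝ be continuous with Q₁(t) ≥ 0 and R₁(t) ≥ δ for some δ > 0; let λ ∈ [0,1]. Let P₁ : [0,T] → ℝ be a differentiable nonnegative function solving P₁'(t) + (2A₁ + C₁² + C̃₁²) P₁ − (B₁ + C₁D₁ + C̃₁D̃₁)² P₁² / ℛ₁ + Q₁ = 0 with P₁(T) = G₁ ≥ 0, where ℛ₁(t) := R₁(t) + (D₁(t)² + D̃₁(t)²) P₁(t) ≥ δ. Assume (Assumption 3.3) that for all t ∈ [0,T]: P₁ (E₁ + C₁F₁ + C̃₁F̃₁) − (B₁ + C₁D₁ + C̃₁D̃₁) P₁² ℛ₁⁻¹ (D₁F₁ + D̃₁F̃₁) − Q₁(1−λ) ≥ 0. Then there exists a unique differentiable function P₂ : [0,T] → ℝ with P₂(T) = 0 satisfying, for all t ∈ [0,T]: P₂'(t) + P₂ [ 2A₁ + E₁ − 2(B₁ + C₁D₁ + C̃₁D̃₁) P₁ ℛ₁⁻¹ B₁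 − (D₁F₁ + D̃₁F̃₁) B₁ P₁ ] − B₁² ℛ₁⁻¹ P₂² + P₁ (E₁ + C₁F₁ + C̃₁F̃₁) − (B₁ + C₁D₁ + C̃₁D̃₁) P₁² ℛ₁⁻¹ (D₁F₁ + D̃₁F̃₁) − Q₁(1−λ) = 0. Moreover this solution satisfies P₂(t) ≥ 0 for all t ∈ [0,T]. -/

import Mathlib

/-!
Write the equation as `P₂' = -(P₂ a - b P₂² + c)`, where `b = B₁² ℛ₁⁻¹ ≥ 0` and `c ≥ 0` is the
coefficient of Assumption 3.3; in reversed time `q(s) = P₂(T - s)` solves `q' = q a - b q² + c`,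
`q(0) = 0`. Clamp the unknown in the field to `[0, M]`, where `M` is the Grönwall bound for
`q' ≤ ‖a‖ q + ‖c‖`: the clamped field is globally Lipschitz, so Picard–Lindelöf gives a solution
on the whole interval. That solution stays nonnegative, since the clamped field equals `c ≥ 0`
where `q < 0`, and then below `M`, since `-b q² ≤ 0`; so the clamping is inactive and it solves
the true equation. Uniqueness holds because the quadratic field is Lipschitz on bounded sets.
-/

open Set Metric
open scoped NNReal

def riccatiField (a b c : ℝ → ℝ) (t x : ℝ) : ℝ := x * a t - b t * x ^ 2 + c t

lemma IsCompact.exists_abs_le_of_continuousOn {f : ℝ → ℝ} {s : Set ℝ} (hs : IsCompact s)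
    (hf : ContinuousOn f s) : ∃ K : ℝ≥0, ∀ t ∈ s, |f t| ≤ K := by
  obtain ⟨C, hC⟩ := hs.exists_bound_of_continuousOn hf
  exact ⟨C.toNNReal, fun t ht => (hC t ht).trans (Real.le_coe_toNNReal C)⟩

section RiccatiField

variable {a b c : ℝ → ℝ} {t : ℝ} {Ka Kb Kc R : ℝ≥0}

lemma lipschitzOnWith_riccatiField (ha : |a t| ≤ Ka) (hb : |b t| ≤ Kb) :
    LipschitzOnWith (Ka + 2 * Kb * R) (riccatiField a b c t) (closedBall 0 R) := by
  refine LipschitzOnWith.of_dist_le_mul fun x hx y hy => ?_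
  rw [mem_closedBall_zero_iff, Real.norm_eq_abs] at hx hy
  have hxy : |x + y| ≤ 2 * R := by linarith [abs_add_le x y]
  calc dist (riccatiField a b c t x) (riccatiField a b c t y)
      = |a t - b t * (x + y)| * |x - y| := by
        rw [Real.dist_eq, ← abs_mul]; congr 1; simp only [riccatiField]; ring
    _ ≤ (Ka + Kb * (2 * R)) * dist x y := by
        rw [Real.dist_eq]
        gcongr
        calc |a t - b t * (x + y)| ≤ |a t| + |b t| * |x + y| := by
              rw [← abs_mul]; exact abs_sub _ _
          _ ≤ Ka + Kb * (2 * R) := by gcongr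
    _ = ↑(Ka + 2 * Kb * R) * dist x y := by push_cast; ring

lemma abs_riccatiField_le (ha : |a t| ≤ Ka) (hb : |b t| ≤ Kb) (hc : |c t| ≤ Kc) {x : ℝ}
    (hx : |x| ≤ R) : |riccatiField a b c t x| ≤ Ka * R + Kb * R ^ 2 + Kc := by
  have hx2 : |x ^ 2| ≤ (R : ℝ) ^ 2 := by rw [abs_pow]; gcongr
  calc |riccatiField a b c t x| ≤ |x| * |a t| + |b t| * |x ^ 2| + |c t| := by
        simp only [riccatiField, ← abs_mul]
        exact (abs_add_le _ _).trans (by gcongr; exact abs_sub _ _)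
    _ ≤ R * Ka + Kb * R ^ 2 + Kc := by gcongr
    _ = Ka * R + Kb * R ^ 2 + Kc := by ring

lemma riccatiField_le (ha : |a t| ≤ Ka) (hb : 0 ≤ b t) (hc : |c t| ≤ Kc) {x : ℝ} (hx : 0 ≤ x) :
    riccatiField a b c t x ≤ Ka * x + Kc := by
  have : x * a t ≤ Ka * x := by
    rw [mul_comm]; exact mul_le_mul_of_nonneg_right ((le_abs_self _).trans ha) hx
  have : 0 ≤ b t * x ^ 2 := by positivity
  unfold riccatiField
  linarith [(le_abs_self (c t)).trans hc]

end RiccatiField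

theorem exists_hasDerivWithinAt_Icc_of_lipschitzWith {E : Type*} [NormedAddCommGroup E]
    [NormedSpace ℝ E] [CompleteSpace E] {v : ℝ → E → E} {t₀ t₁ : ℝ} (ht : t₀ ≤ t₁) {K C : ℝ≥0}
    (hlip : ∀ t ∈ Icc t₀ t₁, LipschitzWith K (v t))
    (hcont : ∀ x, ContinuousOn (v · x) (Icc t₀ t₁))
    (hbound : ∀ t ∈ Icc t₀ t₁, ∀ x, ‖v t x‖ ≤ C) (x₀ : E) :
    ∃ α : ℝ → E, α t₀ = x₀ ∧
      ∀ t ∈ Icc t₀ t₁, HasDerivWithinAt α (v t (α t)) (Icc t₀ t₁) t :=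
  IsPicardLindelof.exists_eq_forall_mem_Icc_hasDerivWithinAt₀
    (t₀ := ⟨t₀, left_mem_Icc.2 ht⟩) (a := C * (t₁ - t₀).toNNReal)
    { lipschitzOnWith := fun t ht => (hlip t ht).lipschitzOnWith
      continuousOn := fun x _ => hcont x
      norm_le := fun t ht x _ => hbound t ht x
      mul_max_le := by simp [sub_nonneg.2 ht] }

theorem nonneg_of_hasDerivWithinAt_nonneg_of_neg {f f' : ℝ → ℝ} {t₀ t₁ : ℝ}
    (hf : ∀ t ∈ Icc t₀ t₁, HasDerivWithinAt f (f' t) (Icc t₀ t₁) t) (h₀ : 0 ≤ f t₀)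
    (hf' : ∀ t ∈ Ico t₀ t₁, f t < 0 → 0 ≤ f' t) : ∀ t ∈ Icc t₀ t₁, 0 ≤ f t := by
  -- At a contact point of `-f` with the barrier `ε (t - t₀ + 1)` we have `f < 0`, so the slope
  -- `-f' ≤ 0` of `-f` is below the slope `ε` of the barrier.
  have hbarrier : ∀ ε > 0, ∀ t ∈ Icc t₀ t₁, -f t ≤ ε * (t - t₀ + 1) := fun ε hε =>
    image_le_of_deriv_right_lt_deriv_boundary (f' := fun t => -f' t)
      (fun t ht => (hf t ht).continuousWithinAt.neg)
      (fun t ht => ((hf t (Ico_subset_Icc_self ht)).mono_of_mem_nhdsWithin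
        (Icc_mem_nhdsGE_of_mem ht)).neg)
      (by simp only [Pi.neg_apply, sub_self, zero_add, mul_one]; linarith) (fun t => (((hasDerivAt_id t).sub_const t₀).add_const 1).const_mul ε)
      (fun t ht heq => by
        have hneg : f t < 0 := by simp only [Pi.neg_apply] at heq; nlinarith [ht.1]
        linarith [hf' t ht hneg])
  intro t ht
  by_contra! hneg
  have hpos : 0 < t - t₀ + 1 := by linarith [ht.1]
  have := hbarrier (-f t / (2 * (t - t₀ + 1))) (div_pos (by linarith) (by positivity)) t ht
  rw [div_mul_eq_mul_div, mul_div_mul_right _ _ hpos.ne'] at this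
  linarith

theorem le_gronwallBound_of_hasDerivWithinAt_Icc {f f' : ℝ → ℝ} {δ K ε t₀ t₁ : ℝ}
    (hf : ∀ t ∈ Icc t₀ t₁, HasDerivWithinAt f (f' t) (Icc t₀ t₁) t) (h₀ : f t₀ ≤ δ)
    (bound : ∀ t ∈ Ico t₀ t₁, f' t ≤ K * f t + ε) :
    ∀ t ∈ Icc t₀ t₁, f t ≤ gronwallBound δ K ε (t - t₀) :=
  le_gronwallBound_of_liminf_deriv_right_le (fun t ht => (hf t ht).continuousWithinAt)
    (fun t ht _ hr => ((hf t (Ico_subset_Icc_self ht)).mono_of_mem_nhdsWithin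
      (Icc_mem_nhdsGE_of_mem ht)).liminf_right_slope_le hr) h₀ bound

section Riccati

variable {a b c : ℝ → ℝ} {t₀ t₁ : ℝ}

theorem eqOn_of_hasDerivWithinAt_neg_riccatiField {f g : ℝ → ℝ}
    (ha : ContinuousOn a (Icc t₀ t₁)) (hb : ContinuousOn b (Icc t₀ t₁))
    (hf : ∀ t ∈ Icc t₀ t₁, HasDerivWithinAt f (-riccatiField a b c t (f t)) (Icc t₀ t₁) t)
    (hg : ∀ t ∈ Icc t₀ t₁, HasDerivWithinAt g (-riccatiField a b c t (g t)) (Icc t₀ t₁) t)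
    (h₁ : f t₁ = g t₁) : EqOn f g (Icc t₀ t₁) := by
  have hfc : ContinuousOn f (Icc t₀ t₁) := fun t ht => (hf t ht).continuousWithinAt
  have hgc : ContinuousOn g (Icc t₀ t₁) := fun t ht => (hg t ht).continuousWithinAt
  obtain ⟨Rf, hRf⟩ := isCompact_Icc.exists_abs_le_of_continuousOn hfc
  obtain ⟨Rg, hRg⟩ := isCompact_Icc.exists_abs_le_of_continuousOn hgc
  obtain ⟨Ka, hKa⟩ := isCompact_Icc.exists_abs_le_of_continuousOn ha
  obtain ⟨Kb, hKb⟩ := isCompact_Icc.exists_abs_le_of_continuousOn hb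
  have hf_mem : ∀ t ∈ Ioc t₀ t₁, f t ∈ closedBall 0 ↑(max Rf Rg) := fun t ht => by
    rw [mem_closedBall_zero_iff, Real.norm_eq_abs]
    exact (hRf t (Ioc_subset_Icc_self ht)).trans (by exact_mod_cast le_max_left _ _)
  have hg_mem : ∀ t ∈ Ioc t₀ t₁, g t ∈ closedBall 0 ↑(max Rf Rg) := fun t ht => by
    rw [mem_closedBall_zero_iff, Real.norm_eq_abs]
    exact (hRg t (Ioc_subset_Icc_self ht)).trans (by exact_mod_cast le_max_right _ _)
  have hleft : ∀ {h : ℝ → ℝ}, (∀ t ∈ Icc t₀ t₁,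
      HasDerivWithinAt h (-riccatiField a b c t (h t)) (Icc t₀ t₁) t) →
      ∀ t ∈ Ioc t₀ t₁, HasDerivWithinAt h (-riccatiField a b c t (h t)) (Iic t) t :=
    fun hh t ht => (hh t (Ioc_subset_Icc_self ht)).mono_of_mem_nhdsWithin
      (Icc_mem_nhdsLE_of_mem ht)
  refine ODE_solution_unique_of_mem_Icc_left (v := fun t x => -riccatiField a b c t x)
    (K := Ka + 2 * Kb * max Rf Rg)
    (fun t ht => ?_) hfc (hleft hf) hf_mem hgc (hleft hg) hg_mem h₁
  have ht' := Ioc_subset_Icc_self ht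
  simpa [Function.comp_def] using LipschitzWith.id.neg.comp_lipschitzOnWith
    (lipschitzOnWith_riccatiField (c := c) (R := max Rf Rg) (hKa t ht') (hKb t ht'))

theorem exists_hasDerivWithinAt_riccatiField_clamp (ht : t₀ ≤ t₁)
    (ha : ContinuousOn a (Icc t₀ t₁)) (hb : ContinuousOn b (Icc t₀ t₁))
    (hc : ContinuousOn c (Icc t₀ t₁)) (M : ℝ≥0) :
    ∃ q : ℝ → ℝ, q t₀ = 0 ∧ ∀ t ∈ Icc t₀ t₁,
      HasDerivWithinAt q (riccatiField a b c t (max 0 (min (M : ℝ) (q t)))) (Icc t₀ t₁) t := by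
  obtain ⟨Ka, hKa⟩ := isCompact_Icc.exists_abs_le_of_continuousOn ha
  obtain ⟨Kb, hKb⟩ := isCompact_Icc.exists_abs_le_of_continuousOn hb
  obtain ⟨Kc, hKc⟩ := isCompact_Icc.exists_abs_le_of_continuousOn hc
  have hclamp_lip : LipschitzWith 1 fun x : ℝ => max 0 (min (M : ℝ) x) :=
    (LipschitzWith.id.const_min _).const_max 0
  have hclamp_mem : ∀ x : ℝ, max 0 (min (M : ℝ) x) ∈ closedBall 0 M := fun x => by
    rw [mem_closedBall_zero_iff, Real.norm_eq_abs, abs_of_nonneg (le_max_left _ _)]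
    exact max_le M.2 (min_le_left _ _)
  exact exists_hasDerivWithinAt_Icc_of_lipschitzWith ht
    (v := fun t x => riccatiField a b c t (max 0 (min (M : ℝ) x)))
    (K := Ka + 2 * Kb * M) (C := Ka * M + Kb * M ^ 2 + Kc)
    (fun t ht => by
      simpa [Function.comp_def] using lipschitzOnWith_univ.1
        ((lipschitzOnWith_riccatiField (c := c) (hKa t ht) (hKb t ht)).comp
          hclamp_lip.lipschitzOnWith (fun x _ => hclamp_mem x)))
    (fun x => by unfold riccatiField; fun_prop)
    (fun t ht x => by
      simpa using abs_riccatiField_le (hKa t ht) (hKb t ht) (hKc t ht)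
        (mem_closedBall_zero_iff.1 (hclamp_mem x)))
    0

theorem exists_nonneg_hasDerivWithinAt_riccatiField (ht : t₀ ≤ t₁)
    (ha : ContinuousOn a (Icc t₀ t₁)) (hb : ContinuousOn b (Icc t₀ t₁))
    (hc : ContinuousOn c (Icc t₀ t₁)) (hb₀ : ∀ t ∈ Icc t₀ t₁, 0 ≤ b t)
    (hc₀ : ∀ t ∈ Icc t₀ t₁, 0 ≤ c t) :
    ∃ q : ℝ → ℝ, q t₀ = 0 ∧
      (∀ t ∈ Icc t₀ t₁, HasDerivWithinAt q (riccatiField a b c t (q t)) (Icc t₀ t₁) t) ∧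
      ∀ t ∈ Icc t₀ t₁, 0 ≤ q t := by
  obtain ⟨Ka, hKa⟩ := isCompact_Icc.exists_abs_le_of_continuousOn ha
  obtain ⟨Kc, hKc⟩ := isCompact_Icc.exists_abs_le_of_continuousOn hc
  have hgronwall_mono := gronwallBound_mono le_rfl Kc.2 Ka.2
  let M : ℝ≥0 := ⟨gronwallBound 0 Ka Kc (t₁ - t₀), by
    simpa [gronwallBound_x0] using hgronwall_mono (sub_nonneg.2 ht)⟩
  obtain ⟨q, hq₀, hq⟩ := exists_hasDerivWithinAt_riccatiField_clamp ht ha hb hc M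
  have hq_nonneg : ∀ t ∈ Icc t₀ t₁, 0 ≤ q t :=
    nonneg_of_hasDerivWithinAt_nonneg_of_neg hq hq₀.ge fun t ht hneg => by
      simpa [riccatiField, max_eq_left ((min_le_right _ _).trans hneg.le)] using
        hc₀ t (Ico_subset_Icc_self ht)
  have hq_le : ∀ t ∈ Icc t₀ t₁, q t ≤ M := fun t ht => by
    refine (le_gronwallBound_of_hasDerivWithinAt_Icc hq hq₀.le (fun s hs => ?_) t ht).trans
      (hgronwall_mono (by linarith [ht.2]))
    have hs' := Ico_subset_Icc_self hs
    have hclamp_le : max 0 (min (M : ℝ) (q s)) ≤ q s :=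
      max_le (hq_nonneg s hs') (min_le_right _ _)
    calc riccatiField a b c s (max 0 (min (M : ℝ) (q s)))
        ≤ Ka * max 0 (min (M : ℝ) (q s)) + Kc :=
          riccatiField_le (hKa s hs') (hb₀ s hs') (hKc s hs') (le_max_left _ _)
      _ ≤ Ka * q s + Kc := by gcongr
  refine ⟨q, hq₀, fun t ht => ?_, hq_nonneg⟩
  have hclamp_eq : max 0 (min (M : ℝ) (q t)) = q t := by
    rw [min_eq_right (hq_le t ht), max_eq_right (hq_nonneg t ht)]
  simpa [hclamp_eq] using hq t ht

theorem exists_nonneg_hasDerivWithinAt_neg_riccatiField (ht : t₀ ≤ t₁)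
    (ha : ContinuousOn a (Icc t₀ t₁)) (hb : ContinuousOn b (Icc t₀ t₁))
    (hc : ContinuousOn c (Icc t₀ t₁)) (hb₀ : ∀ t ∈ Icc t₀ t₁, 0 ≤ b t)
    (hc₀ : ∀ t ∈ Icc t₀ t₁, 0 ≤ c t) :
    ∃ p : ℝ → ℝ, p t₁ = 0 ∧
      (∀ t ∈ Icc t₀ t₁, HasDerivWithinAt p (-riccatiField a b c t (p t)) (Icc t₀ t₁) t) ∧
      ∀ t ∈ Icc t₀ t₁, 0 ≤ p t := by
  set σ : ℝ → ℝ := fun t => t₀ + t₁ - t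
  have hσ : MapsTo σ (Icc t₀ t₁) (Icc t₀ t₁) := fun t ht =>
    ⟨by linarith [ht.2], by linarith [ht.1]⟩
  have hσc : ContinuousOn σ (Icc t₀ t₁) := by fun_prop
  obtain ⟨q, hq₀, hq, hq_nonneg⟩ := exists_nonneg_hasDerivWithinAt_riccatiField ht
    (ha.comp hσc hσ) (hb.comp hσc hσ) (hc.comp hσc hσ) (fun t ht => hb₀ _ (hσ ht))
    (fun t ht => hc₀ _ (hσ ht))
  refine ⟨q ∘ σ, by simpa [σ] using hq₀, fun t ht => ?_, fun t ht => hq_nonneg _ (hσ ht)⟩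
  have h := (hq (σ t) (hσ ht)).comp t
    ((hasDerivAt_id t).const_sub (t₀ + t₁)).hasDerivWithinAt hσ
  have hσσ : σ (σ t) = t := by simp only [σ]; ring
  simpa [riccatiField, hσσ] using h

end Riccati

theorem riccati_P2_exists_unique_general
    (T : ℝ) (hT : 0 < T)
    (A₁ B₁ C₁ Ct₁ D₁ Dt₁ E₁ F₁ Ft₁ Q₁ R₁ : ℝ → ℝ)
    (hA₁ : ContinuousOn A₁ (Icc 0 T)) (hB₁ : ContinuousOn B₁ (Icc 0 T))
    (hC₁ : ContinuousOn C₁ (Icc 0 T)) (hCt₁ : ContinuousOn Ct₁ (Icc 0 T))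
    (hD₁ : ContinuousOn D₁ (Icc 0 T)) (hDt₁ : ContinuousOn Dt₁ (Icc 0 T))
    (hE₁ : ContinuousOn E₁ (Icc 0 T)) (hF₁ : ContinuousOn F₁ (Icc 0 T))
    (hFt₁ : ContinuousOn Ft₁ (Icc 0 T))
    (hQ₁ : ContinuousOn Q₁ (Icc 0 T)) (hR₁ : ContinuousOn R₁ (Icc 0 T))
    (δ : ℝ) (hδ : 0 < δ)
    (lam : ℝ)
    (P₁ : ℝ → ℝ)
    (hP₁ : ∀ t ∈ Icc (0 : ℝ) T,
      HasDerivWithinAt P₁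
        (-((2 * A₁ t + (C₁ t) ^ 2 + (Ct₁ t) ^ 2) * P₁ t
          - (B₁ t + C₁ t * D₁ t + Ct₁ t * Dt₁ t) ^ 2 * (P₁ t) ^ 2
            / (R₁ t + ((D₁ t) ^ 2 + (Dt₁ t) ^ 2) * P₁ t)
          + Q₁ t)) (Icc 0 T) t)
    (hR₁cal : ∀ t ∈ Icc (0 : ℝ) T, δ ≤ R₁ t + ((D₁ t) ^ 2 + (Dt₁ t) ^ 2) * P₁ t)
    (hA33 : ∀ t ∈ Icc (0 : ℝ) T,
      0 ≤ P₁ t * (E₁ t + C₁ t * F₁ t + Ct₁ t * Ft₁ t)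
        - (B₁ t + C₁ t * D₁ t + Ct₁ t * Dt₁ t) * (P₁ t) ^ 2
          * (R₁ t + ((D₁ t) ^ 2 + (Dt₁ t) ^ 2) * P₁ t)⁻¹
          * (D₁ t * F₁ t + Dt₁ t * Ft₁ t)
        - Q₁ t * (1 - lam)) :
    ∃ P₂ : ℝ → ℝ,
      (P₂ T = 0 ∧
        ∀ t ∈ Icc (0 : ℝ) T,
          HasDerivWithinAt P₂
            (-(P₂ t * (2 * A₁ t + E₁ t
                - 2 * (B₁ t + C₁ t * D₁ t + Ct₁ t * Dt₁ t) * P₁ t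
                  * (R₁ t + ((D₁ t) ^ 2 + (Dt₁ t) ^ 2) * P₁ t)⁻¹ * B₁ t
                - (D₁ t * F₁ t + Dt₁ t * Ft₁ t) * B₁ t * P₁ t)
              - (B₁ t) ^ 2 * (R₁ t + ((D₁ t) ^ 2 + (Dt₁ t) ^ 2) * P₁ t)⁻¹ * (P₂ t) ^ 2
              + P₁ t * (E₁ t + C₁ t * F₁ t + Ct₁ t * Ft₁ t)
              - (B₁ t + C₁ t * D₁ t + Ct₁ t * Dt₁ t) * (P₁ t) ^ 2
                * (R₁ t + ((D₁ t) ^ 2 + (Dt₁ t) ^ 2) * P₁ t)⁻¹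
                * (D₁ t * F₁ t + Dt₁ t * Ft₁ t)
              - Q₁ t * (1 - lam))) (Icc 0 T) t) ∧
      (∀ P₂' : ℝ → ℝ,
        (P₂' T = 0 ∧
          ∀ t ∈ Icc (0 : ℝ) T,
            HasDerivWithinAt P₂'
              (-(P₂' t * (2 * A₁ t + E₁ t
                  - 2 * (B₁ t + C₁ t * D₁ t + Ct₁ t * Dt₁ t) * P₁ t
                    * (R₁ t + ((D₁ t) ^ 2 + (Dt₁ t) ^ 2) * P₁ t)⁻¹ * B₁ t
                  - (D₁ t * F₁ t + Dt₁ t * Ft₁ t) * B₁ t * P₁ t)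
                - (B₁ t) ^ 2 * (R₁ t + ((D₁ t) ^ 2 + (Dt₁ t) ^ 2) * P₁ t)⁻¹ * (P₂' t) ^ 2
                + P₁ t * (E₁ t + C₁ t * F₁ t + Ct₁ t * Ft₁ t)
                - (B₁ t + C₁ t * D₁ t + Ct₁ t * Dt₁ t) * (P₁ t) ^ 2
                  * (R₁ t + ((D₁ t) ^ 2 + (Dt₁ t) ^ 2) * P₁ t)⁻¹
                  * (D₁ t * F₁ t + Dt₁ t * Ft₁ t)
                - Q₁ t * (1 - lam))) (Icc 0 T) t) →
        EqOn P₂' P₂ (Icc 0 T)) ∧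
      (∀ t ∈ Icc (0 : ℝ) T, 0 ≤ P₂ t) := by
  have hP₁c : ContinuousOn P₁ (Icc 0 T) := fun t ht => (hP₁ t ht).continuousWithinAt
  have hℛ₁ : ContinuousOn (fun t => (R₁ t + ((D₁ t) ^ 2 + (Dt₁ t) ^ 2) * P₁ t)⁻¹) (Icc 0 T) :=
    (hR₁.add (by fun_prop)).inv₀ fun t ht => (hδ.trans_le (hR₁cal t ht)).ne'
  set a : ℝ → ℝ := fun t => 2 * A₁ t + E₁ t
    - 2 * (B₁ t + C₁ t * D₁ t + Ct₁ t * Dt₁ t) * P₁ t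
      * (R₁ t + ((D₁ t) ^ 2 + (Dt₁ t) ^ 2) * P₁ t)⁻¹ * B₁ t
    - (D₁ t * F₁ t + Dt₁ t * Ft₁ t) * B₁ t * P₁ t
  set b : ℝ → ℝ := fun t => (B₁ t) ^ 2 * (R₁ t + ((D₁ t) ^ 2 + (Dt₁ t) ^ 2) * P₁ t)⁻¹
  set c : ℝ → ℝ := fun t => P₁ t * (E₁ t + C₁ t * F₁ t + Ct₁ t * Ft₁ t)
    - (B₁ t + C₁ t * D₁ t + Ct₁ t * Dt₁ t) * (P₁ t) ^ 2
      * (R₁ t + ((D₁ t) ^ 2 + (Dt₁ t) ^ 2) * P₁ t)⁻¹ * (D₁ t * F₁ t + Dt₁ t * Ft₁ t)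
    - Q₁ t * (1 - lam)
  have ha : ContinuousOn a (Icc 0 T) := by fun_prop
  have hb : ContinuousOn b (Icc 0 T) := by fun_prop
  have hc : ContinuousOn c (Icc 0 T) := by fun_prop
  have hb₀ : ∀ t ∈ Icc (0 : ℝ) T, 0 ≤ b t := fun t ht =>
    mul_nonneg (sq_nonneg _) (inv_nonneg.2 (hδ.le.trans (hR₁cal t ht)))
  obtain ⟨P₂, hP₂T, hP₂, hP₂_nonneg⟩ :=
    exists_nonneg_hasDerivWithinAt_neg_riccatiField hT.le ha hb hc hb₀ hA33
  refine ⟨P₂, ⟨hP₂T, fun t ht => ?_⟩, fun P ⟨hPT, hP⟩ => ?_, hP₂_nonneg⟩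
  · convert hP₂ t ht using 1
    simp only [riccatiField, a, b, c]
    ring
  · refine eqOn_of_hasDerivWithinAt_neg_riccatiField ha hb (fun t ht => ?_) hP₂
      (hPT.trans hP₂T.symm)
    convert hP t ht using 1
    simp only [riccatiField, a, b, c]
    ring

/-- Well-posedness of the Riccati equation (3.11) under Assumption 3.3:
given the nonnegative solution `P₁` of the Riccati equation (3.10), with
`ℛ₁ = R₁ + (D₁² + D̃₁²) P₁ ≥ δ`, and assuming the zeroth-order coefficient
`P₁(E₁ + C₁F₁ + C̃₁F̃₁) − (B₁ + C₁D₁ + C̃₁D̃₁) P₁² ℛ₁⁻¹ (D₁F₁ + D̃₁F̃₁) − Q₁(1−λ)`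
is nonnegative, the terminal value problem (3.11) has a unique solution `P₂`,
which is moreover nonnegative on `[0,T]`. -/
theorem riccati_P2_exists_unique
    (T : ℝ) (hT : 0 < T)
    (A₁ B₁ C₁ Ct₁ D₁ Dt₁ E₁ F₁ Ft₁ Q₁ R₁ : ℝ → ℝ)
    (hA₁ : ContinuousOn A₁ (Icc 0 T)) (hB₁ : ContinuousOn B₁ (Icc 0 T))
    (hC₁ : ContinuousOn C₁ (Icc 0 T)) (hCt₁ : ContinuousOn Ct₁ (Icc 0 T))
    (hD₁ : ContinuousOn D₁ (Icc 0 T)) (hDt₁ : ContinuousOn Dt₁ (Icc 0 T))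
    (hE₁ : ContinuousOn E₁ (Icc 0 T)) (hF₁ : ContinuousOn F₁ (Icc 0 T))
    (hFt₁ : ContinuousOn Ft₁ (Icc 0 T))
    (hQ₁ : ContinuousOn Q₁ (Icc 0 T)) (hR₁ : ContinuousOn R₁ (Icc 0 T))
    (hQ₁pos : ∀ t ∈ Icc (0 : ℝ) T, 0 ≤ Q₁ t)
    (δ : ℝ) (hδ : 0 < δ)
    (hR₁pos : ∀ t ∈ Icc (0 : ℝ) T, δ ≤ R₁ t)
    (lam : ℝ) (hlam : lam ∈ Icc (0 : ℝ) 1)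
    (G₁ : ℝ) (hG₁ : 0 ≤ G₁)
    (P₁ : ℝ → ℝ)
    (hP₁nonneg : ∀ t ∈ Icc (0 : ℝ) T, 0 ≤ P₁ t)
    (hP₁T : P₁ T = G₁)
    (hP₁ : ∀ t ∈ Icc (0 : ℝ) T,
      HasDerivWithinAt P₁
        (-((2 * A₁ t + (C₁ t) ^ 2 + (Ct₁ t) ^ 2) * P₁ t
          - (B₁ t + C₁ t * D₁ t + Ct₁ t * Dt₁ t) ^ 2 * (P₁ t) ^ 2
            / (R₁ t + ((D₁ t) ^ 2 + (Dt₁ t) ^ 2) * P₁ t)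
          + Q₁ t)) (Icc 0 T) t)
    (hR₁cal : ∀ t ∈ Icc (0 : ℝ) T, δ ≤ R₁ t + ((D₁ t) ^ 2 + (Dt₁ t) ^ 2) * P₁ t)
    (hA33 : ∀ t ∈ Icc (0 : ℝ) T,
      0 ≤ P₁ t * (E₁ t + C₁ t * F₁ t + Ct₁ t * Ft₁ t)
        - (B₁ t + C₁ t * D₁ t + Ct₁ t * Dt₁ t) * (P₁ t) ^ 2
          * (R₁ t + ((D₁ t) ^ 2 + (Dt₁ t) ^ 2) * P₁ t)⁻¹
          * (D₁ t * F₁ t + Dt₁ t * Ft₁ t)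
        - Q₁ t * (1 - lam)) :
    ∃ P₂ : ℝ → ℝ,
      (P₂ T = 0 ∧
        ∀ t ∈ Icc (0 : ℝ) T,
          HasDerivWithinAt P₂
            (-(P₂ t * (2 * A₁ t + E₁ t
                - 2 * (B₁ t + C₁ t * D₁ t + Ct₁ t * Dt₁ t) * P₁ t
                  * (R₁ t + ((D₁ t) ^ 2 + (Dt₁ t) ^ 2) * P₁ t)⁻¹ * B₁ t
                - (D₁ t * F₁ t + Dt₁ t * Ft₁ t) * B₁ t * P₁ t)
              - (B₁ t) ^ 2 * (R₁ t + ((D₁ t) ^ 2 + (Dt₁ t) ^ 2) * P₁ t)⁻¹ * (P₂ t) ^ 2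
              + P₁ t * (E₁ t + C₁ t * F₁ t + Ct₁ t * Ft₁ t)
              - (B₁ t + C₁ t * D₁ t + Ct₁ t * Dt₁ t) * (P₁ t) ^ 2
                * (R₁ t + ((D₁ t) ^ 2 + (Dt₁ t) ^ 2) * P₁ t)⁻¹
                * (D₁ t * F₁ t + Dt₁ t * Ft₁ t)
              - Q₁ t * (1 - lam))) (Icc 0 T) t) ∧
      (∀ P₂' : ℝ → ℝ,
        (P₂' T = 0 ∧
          ∀ t ∈ Icc (0 : ℝ) T,
            HasDerivWithinAt P₂'
              (-(P₂' t * (2 * A₁ t + E₁ t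
                  - 2 * (B₁ t + C₁ t * D₁ t + Ct₁ t * Dt₁ t) * P₁ t
                    * (R₁ t + ((D₁ t) ^ 2 + (Dt₁ t) ^ 2) * P₁ t)⁻¹ * B₁ t
                  - (D₁ t * F₁ t + Dt₁ t * Ft₁ t) * B₁ t * P₁ t)
                - (B₁ t) ^ 2 * (R₁ t + ((D₁ t) ^ 2 + (Dt₁ t) ^ 2) * P₁ t)⁻¹ * (P₂' t) ^ 2
                + P₁ t * (E₁ t + C₁ t * F₁ t + Ct₁ t * Ft₁ t)
                - (B₁ t + C₁ t * D₁ t + Ct₁ t * Dt₁ t) * (P₁ t) ^ 2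
                  * (R₁ t + ((D₁ t) ^ 2 + (Dt₁ t) ^ 2) * P₁ t)⁻¹
                  * (D₁ t * F₁ t + Dt₁ t * Ft₁ t)
                - Q₁ t * (1 - lam))) (Icc 0 T) t) →
        EqOn P₂' P₂ (Icc 0 T)) ∧
      (∀ t ∈ Icc (0 : ℝ) T, 0 ≤ P₂ t) :=
  riccati_P2_exists_unique_general T hT A₁ B₁ C₁ Ct₁ D₁ Dt₁ E₁ F₁ Ft₁ Q₁ R₁ hA₁ hB₁ hC₁ hCt₁ hD₁
    hDt₁ hE₁ hF₁ hFt₁ hQ₁ hR₁ δ hδ lam P₁ hP₁ hR₁cal hA33
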